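/- For every positive integer n, G(2n) = n(n+1) + G(n) - V(n)/2 and G(2n+1) = (n+1)² + G(n). -/
import Mathlib


open Finset

/-- The largest odd divisor of `k`. -/
def oddPart (k : ℕ) : ℕ := ordCompl[2] k

/-- `V n = ∑_{k=1}^n α(k)/k` as a rational number. -/
def V (n : ℕ) : ℚ := ∑ k ∈ Finset.Icc 1 n, (oddPart k : ℚ) / k

/-- `v n = V n - 2n/3`. -/
def v (n : ℕ) : ℚ := V n - 2 * n / 3

/-- `U n = ∑_{k=1}^n α(k)`. -/
def U (n : ℕ) : ℕ := ∑ k ∈ Finset.Icc 1 n, oddPart k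

/-- `G n = ∑_{k=1}^n (n+1-k)·α(k)/k` as a rational number. -/
def G (n : ℕ) : ℚ := ∑ k ∈ Finset.Icc 1 n, ((n : ℚ) + 1 - k) * (oddPart k : ℚ) / k

/-- `g n = n(n+2)/3 - G n`. -/
def g (n : ℕ) : ℚ := n * (n + 2) / 3 - G n

lemma oddPart_two_mul (m : ℕ) : oddPart (2*m) = oddPart m := by
  unfold oddPart
  rw [Nat.ordCompl_mul]
  norm_num [Nat.Prime.factorization_self (by norm_num : Nat.Prime 2)]

lemma oddPart_odd (k : ℕ) (h : Odd k) : oddPart k = k := by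
  unfold oddPart
  rw [Nat.factorization_eq_zero_of_not_dvd
    (by rw [Nat.two_dvd_ne_zero]; exact Nat.odd_iff.mp h)]
  simp

lemma V_succ (n : ℕ) : V (n+1) = V n + oddPart (n+1) / (n+1) := by
  unfold V
  rw [Finset.sum_Icc_succ_top (by omega)]
  push_cast; ring

lemma V_two_mul (n : ℕ) : V (2*n) = n + V n / 2 := by
  induction n with
  | zero => simp [V]
  | succ n ih =>
    have h1 : 2*(n+1) = (2*n+1)+1 := by ring
    rw [h1, V_succ, V_succ, show (2*n+1+1 : ℕ) = 2*(n+1) from by ring,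
      oddPart_two_mul, oddPart_odd (2*n+1) ⟨n, by ring⟩, ih, V_succ]
    have h2 : (2*(n:ℚ)+1) ≠ 0 := by positivity
    have h3 : ((n:ℚ)+1) ≠ 0 := by positivity
    push_cast
    field_simp
    ring

lemma V_two_mul_add_one (n : ℕ) : V (2*n+1) = (n+1) + V n / 2 := by
  rw [V_succ, oddPart_odd (2*n+1) ⟨n, by ring⟩, V_two_mul]
  have : ((2*n+1 : ℕ) : ℚ) ≠ 0 := by positivity
  push_cast at *
  field_simp
  ring

lemma G_succ (n : ℕ) : G (n+1) = G n + V (n+1) := by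
  unfold G V
  rw [Finset.sum_Icc_succ_top (le_refl 1 |>.trans (by omega)), Finset.sum_Icc_succ_top (by omega)]
  push_cast
  have : ∀ k ∈ Finset.Icc 1 n, ((n:ℚ) + 1 + 1 - k) * (oddPart k : ℚ) / k
      = ((n:ℚ) + 1 - k) * (oddPart k : ℚ) / k + (oddPart k : ℚ) / k := fun k _ => by ring
  rw [Finset.sum_congr rfl this, Finset.sum_add_distrib]
  ring

lemma main_rec (n : ℕ) : G (2 * n) = n * (n + 1) + G n - V n / 2 ∧
      G (2 * n + 1) = ((n : ℚ) + 1) ^ 2 + G n := by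
  induction n with
  | zero => constructor <;> simp [G, V, G_succ, V_succ, oddPart]
  | succ n ih =>
    obtain ⟨ih1, ih2⟩ := ih
    have e1 : G (2*(n+1)) = ((n:ℚ)+1) * ((n:ℚ)+2) + G (n+1) - V (n+1) / 2 := by
      rw [show 2*(n+1) = (2*n+1)+1 by ring, G_succ, ih2,
        show (2*n+1)+1 = 2*(n+1) by ring, V_two_mul, G_succ, V_succ]
      push_cast
      ring
    constructor
    · rw [e1]; push_cast; ring
    · rw [show 2*(n+1)+1 = (2*(n+1))+1 by ring, G_succ,
        show 2*(n+1)+1 = 2*(n+1)+1 by ring, V_two_mul_add_one, e1]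
      push_cast
      ring

theorem stmt13 (n : ℕ) (hn : 0 < n) :
    G (2 * n) = n * (n + 1) + G n - V n / 2 ∧
      G (2 * n + 1) = ((n : ℚ) + 1) ^ 2 + G n := main_rec n
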